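/- For every n ∈ ℕ, every factor w of η with |w| ≤ 2ⁿ⁺¹ − 1 (the length of p⁽ⁿ⁾) is a factor of the finite word p⁽ⁿ⁺³⁾ = τⁿ⁺³(a). -/

import Mathlib

/-- The four-letter alphabet `A = {a, x, y, z}`. -/
inductive A : Type
  | a | x | y | z
  deriving DecidableEq, Repr

/-- The substitution `τ : a ↦ axa, x ↦ y, y ↦ z, z ↦ x`. -/
def tau : A → List A
  | A.a => [A.a, A.x, A.a]
  | A.x => [A.y]
  | A.y => [A.z]
  | A.z => [A.x]

/-- The substitution `τ` extended to finite words by concatenation. -/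
def tauW (w : List A) : List A := w.flatMap tau

/-- `pw n = τⁿ(a)`, a word of length `2^(n+1) - 1`. -/
def pw : ℕ → List A
  | 0 => [A.a]
  | n + 1 => tauW (pw n)

/-- The fixed point `η` of `τ`: the unique one-sided infinite word having every
`τⁿ(a)` as a prefix.  (Since `pw (n+1)` has length `2^(n+2) - 1 > n`, reading its
`n`-th letter is well defined and independent of the choice of a large enough iterate.) -/
def eta (n : ℕ) : A := (pw (n + 1)).getD n A.a

/-- `w` is a (finite) factor of `η`. -/
def IsFactorEta (w : List A) : Prop :=
  ∃ i : ℕ, w = (List.range w.length).map (fun k => eta (i + k))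

/-!
The iterates satisfy `τⁿ⁺¹(a) = τⁿ(a) · τⁿ(x) · τⁿ(a)`, where the middle letter `τⁿ(x)` runs
through `x, y, z` with period 3. Every factor of `η` lies in some `τᵐ(a)`; splitting `τᵐ(a)` at its
middle letter `c`, a factor of length at most `|τⁿ(a)|` (with `n < m`) either lies in a copy of
`τᵐ⁻¹(a)` or straddles `c`, and since `τⁿ(a)` is both a prefix and a suffix of `τᵐ⁻¹(a)` it then
lies in `τⁿ(a) · c · τⁿ(a)`. As `c` is one of `τⁿ(x), τⁿ⁺¹(x), τⁿ⁺²(x)`, this word occurs in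
`τⁿ⁺³(a)`.
-/

namespace List

variable {α : Type*}

theorem append_cons_infix_append_cons {p u : List α} (c : α) (hpre : p <+: u) (hsuf : p <:+ u) :
    p ++ c :: p <:+: u ++ c :: u := by
  obtain ⟨t, rfl⟩ := hpre
  obtain ⟨s, hs⟩ := hsuf
  exact ⟨s, t, by nth_rw 1 [← hs]; simp⟩

theorem infix_append_cons_of_border {p u w : List α} {c : α} (hpre : p <+: u) (hsuf : p <:+ u)
    (hw : w <:+: u ++ c :: u) (hl : w.length ≤ p.length) : w <:+: u ∨ w <:+: p ++ c :: p := by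
  have prefix_cons {v : List α} (hv : v <+: c :: u) (hlv : v.length ≤ p.length + 1) :
      v <+: c :: p :=
    prefix_of_prefix_length_le hv (cons_prefix_cons.mpr ⟨rfl, hpre⟩) (by simpa using hlv)
  rcases infix_append_iff.mp hw with hu | hcu | ⟨l₁, l₂, rfl, h₁, h₂⟩
  · exact .inl hu
  · rcases infix_cons_iff.mp hcu with hcu | hu
    · exact .inr ((prefix_cons hcu (by omega)).isInfix.trans infix_append_right)
    · exact .inl hu
  · simp only [length_append] at hl
    refine .inr (infix_append_iff.mpr (.inr (.inr ⟨l₁, l₂, rfl, ?_, ?_⟩)))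
    · exact suffix_of_suffix_length_le h₁ hsuf (by omega)
    · exact prefix_cons h₂ (by omega)

end List

/-- `τⁿ(x)`, which has period 3 in `n`. -/
def midLetter : ℕ → A
  | 0 => A.x
  | 1 => A.y
  | 2 => A.z
  | n + 3 => midLetter n

theorem midLetter_ne_a (n : ℕ) : midLetter n ≠ A.a := by
  induction n using midLetter.induct <;> simp_all [midLetter]

theorem tau_midLetter (n : ℕ) : tau (midLetter n) = [midLetter (n + 1)] := by
  induction n using midLetter.induct <;> simp_all [midLetter, tau]

theorem eq_midLetter_of_ne_a (n : ℕ) {s : A} (hs : s ≠ A.a) :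
    s = midLetter n ∨ s = midLetter (n + 1) ∨ s = midLetter (n + 2) := by
  induction n using midLetter.induct <;> cases s <;> simp_all [midLetter]

theorem pw_succ (n : ℕ) : pw (n + 1) = pw n ++ midLetter n :: pw n := by
  induction n with
  | zero => rfl
  | succ n ih =>
    change tauW (pw (n + 1)) = pw (n + 1) ++ _ :: pw (n + 1)
    conv_lhs => rw [ih]
    rw [tauW, List.flatMap_append, List.flatMap_cons, tau_midLetter]
    rfl

theorem pw_length (n : ℕ) : (pw n).length = 2 ^ (n + 1) - 1 := by
  induction n with
  | zero => rfl
  | succ n ih =>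
    have : 1 ≤ 2 ^ (n + 1) := Nat.one_le_two_pow
    rw [pw_succ, List.length_append, List.length_cons, ih, pow_succ 2 (n + 1)]
    omega

theorem lt_length_pw (n : ℕ) : n < (pw n).length := by
  rw [pw_length]
  have := Nat.lt_two_pow_self (n := n + 1)
  omega

theorem pw_prefix_pw {n m : ℕ} (h : n ≤ m) : pw n <+: pw m := by
  induction m, h using Nat.le_induction with
  | base => exact List.prefix_rfl
  | succ m _ ih =>
    rw [pw_succ]
    exact ih.trans (List.prefix_append _ _)

theorem pw_suffix_pw {n m : ℕ} (h : n ≤ m) : pw n <:+ pw m := by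
  induction m, h using Nat.le_induction with
  | base => exact List.suffix_rfl
  | succ m _ ih =>
    rw [pw_succ]
    exact ih.trans ((List.suffix_cons _ _).trans (List.suffix_append _ _))

theorem append_cons_infix_pw_add_three (n : ℕ) {s : A} (hs : s ≠ A.a) :
    pw n ++ s :: pw n <:+: pw (n + 3) := by
  have hmid (k : ℕ) (hk : k ≤ 2) : pw n ++ midLetter (n + k) :: pw n <:+: pw (n + 3) := by
    refine (List.append_cons_infix_append_cons _ (pw_prefix_pw (by omega : n ≤ n + k))
      (pw_suffix_pw (by omega))).trans ?_
    rw [← pw_succ]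
    exact (pw_prefix_pw (by omega)).isInfix
  rcases eq_midLetter_of_ne_a n hs with rfl | rfl | rfl
  exacts [hmid 0 (by omega), hmid 1 (by omega), hmid 2 (by omega)]

theorem infix_pw_add_three {n m : ℕ} {w : List A} (hw : w <:+: pw m)
    (hl : w.length ≤ (pw n).length) : w <:+: pw (n + 3) := by
  induction m with
  | zero => exact hw.trans (pw_prefix_pw (Nat.zero_le _)).isInfix
  | succ m ih =>
    by_cases hm : m + 1 ≤ n + 3
    · exact hw.trans (pw_prefix_pw hm).isInfix
    rw [pw_succ] at hw
    rcases List.infix_append_cons_of_border (pw_prefix_pw (by omega)) (pw_suffix_pw (by omega))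
      hw hl with hw | hw
    · exact ih hw
    · exact hw.trans (append_cons_infix_pw_add_three n (midLetter_ne_a m))

theorem eta_eq_getElem {k m : ℕ} (hk : k < (pw m).length) : eta k = (pw m)[k] := by
  have hk' : k < (pw (k + 1)).length := (lt_length_pw k).trans_le
    (pw_prefix_pw (Nat.le_succ k)).length_le
  rw [eta, List.getD_eq_getElem _ _ hk']
  rcases le_total (k + 1) m with h | h
  · exact (pw_prefix_pw h).getElem hk'
  · exact ((pw_prefix_pw h).getElem hk).symm

theorem IsFactorEta.exists_infix_pw {w : List A} (hw : IsFactorEta w) : ∃ m, w <:+: pw m := by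
  obtain ⟨i, hw⟩ := hw
  set m := i + w.length
  have hm : m ≤ (pw m).length := (lt_length_pw m).le
  refine ⟨m, ?_⟩
  suffices w = ((pw m).drop i).take w.length from
    this ▸ (List.take_prefix _ _).isInfix.trans (List.drop_suffix _ _).isInfix
  refine List.ext_getElem (by simp; omega) fun k hk _ => ?_
  rw [List.getElem_of_eq hw hk]
  simp only [List.getElem_map, List.getElem_range, List.getElem_take, List.getElem_drop]
  exact eta_eq_getElem (by omega)

/-- Every factor of `η` of length at most `|p⁽ⁿ⁾| = 2^(n+1) - 1` is a factor of the
finite word `p⁽ⁿ⁺³⁾ = τ^(n+3)(a)`. -/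
theorem factor_appears_in_p_n_plus_three (n : ℕ) (w : List A)
    (hw : IsFactorEta w) (hl : w.length ≤ 2 ^ (n + 1) - 1) :
    w <:+: pw (n + 3) := by
  obtain ⟨m, hm⟩ := hw.exists_infix_pw
  exact infix_pw_add_three hm (hl.trans_eq (pw_length n).symm)
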